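/- arXiv:2411.18532 — 2 statements merged into one kernel-verified Lean document; each statement's English description precedes it below -/
import Mathlib

section
/- Let u be a classical solution of the constrained flow on [0,T]. Then the L² norm is conserved: for every t ∈ [0,T], ∫_Ω u(t,x)² dx = ∫_Ω u(0,x)² dx. -/
open MeasureTheory Set Filter

noncomputable section

/-- The domain: open ball of radius `R` in `ℝ^d`. -/
def Om (d : ℕ) (R : ℝ) : Set (EuclideanSpace ℝ (Fin d)) := Metric.ball 0 R

/-- Laplacian as the sum of second directional derivatives along the standard basis. -/
def lapl {d : ℕ} (w : EuclideanSpace ℝ (Fin d) → ℝ) (x : EuclideanSpace ℝ (Fin d)) : ℝ :=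
  ∑ i : Fin d, fderiv ℝ (fun y => fderiv ℝ w y (EuclideanSpace.single i 1)) x
    (EuclideanSpace.single i 1)

/-- The nonlocal coefficient `μ[w]` over a region `Ω`. -/
def muF {d : ℕ} (Ω : Set (EuclideanSpace ℝ (Fin d))) (σ ω : ℝ)
    (w : EuclideanSpace ℝ (Fin d) → ℝ) : ℝ :=
  ((∫ x in Ω, ‖fderiv ℝ w x‖ ^ 2) + ω * ∫ x in Ω, (w x) ^ 2) /
    ∫ x in Ω, |w x| ^ (2 * σ + 2)

/-- The functional `F[w]` over a region `Ω`. -/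
def FF {d : ℕ} (Ω : Set (EuclideanSpace ℝ (Fin d))) (σ ω : ℝ)
    (w : EuclideanSpace ℝ (Fin d) → ℝ) : ℝ :=
  ((∫ x in Ω, ‖fderiv ℝ w x‖ ^ 2) + ω * ∫ x in Ω, (w x) ^ 2) /
    (∫ x in Ω, |w x| ^ (2 * σ + 2)) ^ (1 / (σ + 1))

/-- A classical solution of the constrained flow on the time interval `I`,
on the ball of radius `R`: smooth on an open neighbourhood of `I × closure Ω`,
vanishing on the lateral boundary, with positive `L^{2σ+2}` integral, satisfying
`∂ₜ u = Δu - ω u + μ[u] |u|^{2σ} u` on `Ω`. -/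
structure IsClassicalSolution (d : ℕ) (R σ ω : ℝ) (I : Set ℝ)
    (u : ℝ → EuclideanSpace ℝ (Fin d) → ℝ) : Prop where
  smooth : ∃ U : Set (ℝ × EuclideanSpace ℝ (Fin d)), IsOpen U ∧
      I ×ˢ closure (Om d R) ⊆ U ∧ ContDiffOn ℝ (⊤ : ℕ∞) (fun p => u p.1 p.2) U
  boundary : ∀ t ∈ I, ∀ x : EuclideanSpace ℝ (Fin d), ‖x‖ = R → u t x = 0
  posint : ∀ t ∈ I, 0 < ∫ x in Om d R, |u t x| ^ (2 * σ + 2)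
  flow : ∀ t ∈ I, ∀ x ∈ Om d R,
      deriv (fun s => u s x) t =
        lapl (u t) x - ω * u t x + muF (Om d R) σ ω (u t) * |u t x| ^ (2 * σ) * u t x

/-!
Differentiating under the integral sign and inserting the flow,
`d/dt ∫ u² = 2 (∫ u Δu - ω ∫ u² + μ[u] ∫ |u|^(2σ+2))`. Since `u` vanishes on the sphere, Green's
identity `∫ u Δu = -∫ |∇u|²` holds, and then the bracket vanishes by the very definition of `μ[u]`.
Green's identity itself comes from Fubini: each `∂ᵢ (u ∂ᵢu)` integrates to zero along every chord
of the ball parallel to the `i`-th axis.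
-/

open Metric

section Chord

variable {E : Type*} [NormedAddCommGroup E] [InnerProductSpace ℝ E]

theorem norm_add_smul_sq_of_inner_eq_zero {x₀ v : E} (hv : ‖v‖ = 1) (hx₀v : inner ℝ x₀ v = 0)
    (a : ℝ) : ‖x₀ + a • v‖ ^ 2 = ‖x₀‖ ^ 2 + a ^ 2 := by
  rw [norm_add_sq_real, inner_smul_right, hx₀v, norm_smul, hv, Real.norm_eq_abs]
  simp [sq_abs]

theorem add_smul_mem_ball_iff {x₀ v : E} (hv : ‖v‖ = 1) (hx₀v : inner ℝ x₀ v = 0) {R : ℝ}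
    (hR : 0 < R) (a : ℝ) :
    x₀ + a • v ∈ ball 0 R ↔ a ∈ Ioo (-√(R ^ 2 - ‖x₀‖ ^ 2)) √(R ^ 2 - ‖x₀‖ ^ 2) := by
  rw [mem_ball_zero_iff, mem_Ioo, ← abs_lt, Real.lt_sqrt (abs_nonneg a), sq_abs,
    ← sq_lt_sq₀ (norm_nonneg _) hR.le, norm_add_smul_sq_of_inner_eq_zero hv hx₀v]
  constructor <;> intro h <;> linarith

/-- The chord meets the ball in an open interval whose endpoints lie on the sphere, so this is the
fundamental theorem of calculus. -/
theorem integral_indicator_ball_fderiv_chord_eq_zero {F : E → ℝ} {W : Set E} (hW : IsOpen W)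
    {R : ℝ} (hR : 0 < R) (hRW : closedBall 0 R ⊆ W) (hF : ContDiffOn ℝ 1 F W)
    (hF₀ : ∀ x, ‖x‖ = R → F x = 0) {x₀ v : E} (hv : ‖v‖ = 1) (hx₀v : inner ℝ x₀ v = 0) :
    ∫ a : ℝ, (ball 0 R).indicator (fun x => fderiv ℝ F x v) (x₀ + a • v) = 0 := by
  set h := √(R ^ 2 - ‖x₀‖ ^ 2)
  have hpre : (fun a : ℝ => x₀ + a • v) ⁻¹' ball 0 R = Ioo (-h) h :=
    Set.ext (add_smul_mem_ball_iff hv hx₀v hR)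
  rw [show (fun a : ℝ => (ball 0 R).indicator (fun x => fderiv ℝ F x v) (x₀ + a • v))
      = (Ioo (-h) h).indicator (fun a => fderiv ℝ F (x₀ + a • v) v) by
    rw [← hpre]; ext a; exact (indicator_comp_right _).symm,
    integral_indicator measurableSet_Ioo, ← integral_Ioc_eq_integral_Ioo,
    ← intervalIntegral.integral_of_le (by simp [h])]
  rcases (Real.sqrt_nonneg (R ^ 2 - ‖x₀‖ ^ 2)).eq_or_lt with h0 | hpos
  · simp [h, ← h0]
  have hsq : h ^ 2 = R ^ 2 - ‖x₀‖ ^ 2 := Real.sq_sqrt (by nlinarith [Real.sqrt_pos.1 hpos])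
  have hnorm : ∀ a, ‖x₀ + a • v‖ ^ 2 = R ^ 2 + (a ^ 2 - h ^ 2) := fun a => by
    rw [norm_add_smul_sq_of_inner_eq_zero hv hx₀v, hsq]; ring
  have hmem : ∀ a ∈ uIcc (-h) h, x₀ + a • v ∈ W := fun a ha => by
    rw [uIcc_of_le (by linarith)] at ha
    refine hRW (mem_closedBall_zero_iff.2 (pow_le_pow_iff_left₀ (norm_nonneg _) hR.le two_ne_zero
      |>.1 ?_))
    rw [hnorm]; nlinarith [ha.1, ha.2]
  have hend : ∀ a, a ^ 2 = h ^ 2 → F (x₀ + a • v) = 0 := fun a ha => hF₀ _ <| by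
    rw [← pow_left_inj₀ (norm_nonneg _) hR.le two_ne_zero, hnorm, ha]; ring
  have hderiv : ∀ a ∈ uIcc (-h) h,
      HasDerivAt (fun b => F (x₀ + b • v)) (fderiv ℝ F (x₀ + a • v) v) a := fun a ha => by
      have hline : HasDerivAt (fun b : ℝ => x₀ + b • v) v a := by
        simpa using ((hasDerivAt_id a).smul_const v).const_add x₀
      exact ((hF.differentiableOn one_ne_zero).differentiableAt
        (hW.mem_nhds (hmem a ha))).hasFDerivAt.comp_hasDerivAt a hline
  have hcont : ContinuousOn (fun a => fderiv ℝ F (x₀ + a • v) v) (uIcc (-h) h) :=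
    ((hF.continuousOn_fderiv_of_isOpen hW le_rfl).clm_apply continuousOn_const).comp
      (by fun_prop) hmem
  rw [intervalIntegral.integral_eq_sub_of_hasDerivAt hderiv hcont.intervalIntegrable,
    hend h rfl, hend (-h) (neg_sq h), sub_zero]

end Chord

theorem ContinuousOn.integrableOn_ball {X F : Type*} [MetricSpace X] [ProperSpace X]
    [MeasurableSpace X] [OpensMeasurableSpace X] {μ : Measure X} [IsFiniteMeasureOnCompacts μ]
    [NormedAddCommGroup F] {f : X → F} {W : Set X} (hf : ContinuousOn f W) {x : X} {R : ℝ}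
    (hRW : closedBall x R ⊆ W) : IntegrableOn f (ball x R) μ :=
  ((hf.mono hRW).integrableOn_compact (isCompact_closedBall x R)).mono_set ball_subset_closedBall

theorem integral_ball_fderiv_single_eq_zero {d : ℕ} {F : EuclideanSpace ℝ (Fin d) → ℝ}
    {W : Set (EuclideanSpace ℝ (Fin d))} (hW : IsOpen W) {R : ℝ} (hR : 0 < R)
    (hRW : closedBall 0 R ⊆ W) (hF : ContDiffOn ℝ 1 F W) (hF₀ : ∀ x, ‖x‖ = R → F x = 0)
    (i : Fin d) : ∫ x in ball 0 R, fderiv ℝ F x (EuclideanSpace.single i 1) = 0 := by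
  obtain ⟨n, rfl⟩ : ∃ n, d = n + 1 := ⟨d - 1, by have := i.pos; omega⟩
  set e : EuclideanSpace ℝ (Fin (n + 1)) := EuclideanSpace.single i 1
  set G := (ball (0 : EuclideanSpace ℝ (Fin (n + 1))) R).indicator (fun x => fderiv ℝ F x e)
  have hG : Integrable G := (integrable_indicator_iff measurableSet_ball).2 <|
    ((hF.continuousOn_fderiv_of_isOpen hW le_rfl).clm_apply continuousOn_const).integrableOn_ball
      hRW
  -- Fubini in the coordinates `(x i, (x j)_{j ≠ i})`
  let Ψ : (ℝ × (Fin n → ℝ)) ≃ᵐ EuclideanSpace ℝ (Fin (n + 1)) :=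
    (MeasurableEquiv.piFinSuccAbove (fun _ => ℝ) i).symm.trans
      (MeasurableEquiv.toLp 2 (Fin (n + 1) → ℝ))
  have hΨ : MeasurePreserving Ψ (volume.prod volume) volume := by
    rw [← Measure.volume_eq_prod]
    exact (PiLp.volume_preserving_toLp _).comp
      (volume_preserving_piFinSuccAbove (fun _ => ℝ) i).symm
  have hΨ_apply : ∀ a y, Ψ (a, y) = Ψ (0, y) + a • e := fun a y => by
    ext j
    rcases eq_or_ne j i with rfl | hj
    · simp [Ψ, e, MeasurableEquiv.piFinSuccAbove_symm_apply]
    · obtain ⟨k, rfl⟩ := Fin.exists_succAbove_eq hj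
      simp [Ψ, e, MeasurableEquiv.piFinSuccAbove_symm_apply, Fin.succAbove_ne i k]
  have hΨ_inner : ∀ y, inner ℝ (Ψ (0, y)) e = 0 := fun y => by
    simp [Ψ, e, EuclideanSpace.inner_single_right, MeasurableEquiv.piFinSuccAbove_symm_apply]
  have he : ‖e‖ = 1 := by simp [e]
  calc ∫ x in ball 0 R, fderiv ℝ F x e
      = ∫ p, G (Ψ p) ∂(volume.prod volume) := by
        rw [← integral_indicator measurableSet_ball, hΨ.integral_comp Ψ.measurableEmbedding]
    _ = ∫ y, ∫ a, G (Ψ (a, y)) :=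
        integral_prod_symm _ ((hΨ.integrable_comp_emb Ψ.measurableEmbedding).2 hG)
    _ = 0 := by
        refine (integral_congr_ae (Eventually.of_forall fun y => ?_)).trans (integral_zero _ ℝ)
        rw [show (fun a => G (Ψ (a, y))) = fun a => G (Ψ (0, y) + a • e) from
          funext fun a => by rw [hΨ_apply a y]]
        exact integral_indicator_ball_fderiv_chord_eq_zero hW hR hRW hF hF₀ he (hΨ_inner y)

theorem ContinuousLinearMap.norm_sq_eq_sum_apply_single {ι : Type*} [Fintype ι] [DecidableEq ι]
    (L : EuclideanSpace ℝ ι →L[ℝ] ℝ) :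
    ‖L‖ ^ 2 = ∑ i, L (EuclideanSpace.single i 1) ^ 2 := by
  set v := (InnerProductSpace.toDual ℝ (EuclideanSpace ℝ ι)).symm L
  have hv : ∀ i, v i = L (EuclideanSpace.single i 1) := fun i => by
    rw [← InnerProductSpace.toDual_symm_apply, EuclideanSpace.inner_single_right]
    simp [v]
  rw [← (InnerProductSpace.toDual ℝ _).symm.norm_map L, EuclideanSpace.norm_eq,
    Real.sq_sqrt (by positivity)]
  simp [← hv, v]

theorem ContDiffOn.contDiffOn_fderiv_apply_single {d : ℕ} {w : EuclideanSpace ℝ (Fin d) → ℝ}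
    {W : Set (EuclideanSpace ℝ (Fin d))} (hW : IsOpen W) (hw : ContDiffOn ℝ 2 w W) (i : Fin d) :
    ContDiffOn ℝ 1 (fun x => fderiv ℝ w x (EuclideanSpace.single i 1)) W :=
  (hw.fderiv_of_isOpen hW (by norm_num)).clm_apply contDiffOn_const

theorem ContDiffOn.continuousOn_lapl {d : ℕ} {w : EuclideanSpace ℝ (Fin d) → ℝ}
    {W : Set (EuclideanSpace ℝ (Fin d))} (hW : IsOpen W) (hw : ContDiffOn ℝ 2 w W) :
    ContinuousOn (lapl w) W :=
  continuousOn_finsetSum _ fun i _ =>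
    ((hw.contDiffOn_fderiv_apply_single hW i).continuousOn_fderiv_of_isOpen hW le_rfl).clm_apply
      continuousOn_const

theorem integral_ball_mul_lapl_eq_neg {d : ℕ} {w : EuclideanSpace ℝ (Fin d) → ℝ}
    {W : Set (EuclideanSpace ℝ (Fin d))} (hW : IsOpen W) {R : ℝ} (hR : 0 < R)
    (hRW : closedBall 0 R ⊆ W) (hw : ContDiffOn ℝ 2 w W) (hw₀ : ∀ x, ‖x‖ = R → w x = 0) :
    ∫ x in ball 0 R, w x * lapl w x = -∫ x in ball 0 R, ‖fderiv ℝ w x‖ ^ 2 := by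
  set e : Fin d → EuclideanSpace ℝ (Fin d) := fun i => EuclideanSpace.single i 1
  set g : Fin d → EuclideanSpace ℝ (Fin d) → ℝ := fun i x => fderiv ℝ w x (e i)
  have hw₁ : ContDiffOn ℝ 1 w W := hw.of_le (by norm_num)
  have hg : ∀ i, ContDiffOn ℝ 1 (g i) W := hw.contDiffOn_fderiv_apply_single hW
  have hwg : ∀ i, ContDiffOn ℝ 1 (fun x => w x * g i x) W := fun i => hw₁.mul (hg i)
  have hdiv : ∀ x ∈ W, ∑ i, fderiv ℝ (fun y => w y * g i y) x (e i)
      = w x * lapl w x + ‖fderiv ℝ w x‖ ^ 2 := fun x hx => by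
    have hdiff : ∀ {f : EuclideanSpace ℝ (Fin d) → ℝ}, ContDiffOn ℝ 1 f W →
        DifferentiableAt ℝ f x := fun hf =>
      (hf.differentiableOn one_ne_zero).differentiableAt (hW.mem_nhds hx)
    simp only [fderiv_fun_mul (hdiff hw₁) (hdiff (hg _)), add_apply,
      smul_apply, smul_eq_mul, Finset.sum_add_distrib, ← Finset.mul_sum,
      (fderiv ℝ w x).norm_sq_eq_sum_apply_single]
    simp only [lapl, g, e, sq]
  have hint₁ : IntegrableOn (fun x => w x * lapl w x) (ball 0 R) :=
    (hw₁.continuousOn.mul (hw.continuousOn_lapl hW)).integrableOn_ball hRW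
  have hint₂ : IntegrableOn (fun x => ‖fderiv ℝ w x‖ ^ 2) (ball 0 R) :=
    ((hw.continuousOn_fderiv_of_isOpen hW (by norm_num)).norm.fun_pow 2).integrableOn_ball hRW
  have hsum : ∫ x in ball 0 R, (w x * lapl w x + ‖fderiv ℝ w x‖ ^ 2) = 0 := by
    rw [← setIntegral_congr_fun measurableSet_ball fun x hx => hdiv x (hRW
      (ball_subset_closedBall hx)), integral_finsetSum]
    · exact Finset.sum_eq_zero fun i _ => integral_ball_fderiv_single_eq_zero hW hR hRW (hwg i)
        (fun x hx => by simp [hw₀ x hx]) i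
    · exact fun i _ => (((hwg i).continuousOn_fderiv_of_isOpen hW le_rfl).clm_apply
        continuousOn_const).integrableOn_ball hRW
  rw [integral_add hint₁ hint₂] at hsum
  linarith

theorem ContDiffOn.hasDerivAt_fst {E F : Type*} [NormedAddCommGroup E] [NormedSpace ℝ E]
    [NormedAddCommGroup F] [NormedSpace ℝ F] {f : ℝ × E → F} {U : Set (ℝ × E)} (hU : IsOpen U)
    (hf : ContDiffOn ℝ 1 f U) {s : ℝ} {x : E} (hsx : (s, x) ∈ U) :
    HasDerivAt (fun s => f (s, x)) (fderiv ℝ f (s, x) (1, 0)) s := by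
  have hfd := ((hf.differentiableOn one_ne_zero).differentiableAt (hU.mem_nhds hsx)).hasFDerivAt
  exact hfd.comp_hasDerivAt s ((hasDerivAt_id' s).prodMk (hasDerivAt_const s x))

theorem hasDerivAt_setIntegral_of_contDiffOn {E : Type*} [NormedAddCommGroup E]
    [NormedSpace ℝ E] [MeasurableSpace E] [OpensMeasurableSpace E] {μ : Measure E}
    [IsFiniteMeasureOnCompacts μ] {f : ℝ → E → ℝ} {U : Set (ℝ × E)} (hU : IsOpen U)
    (hf : ContDiffOn ℝ 1 (fun p => f p.1 p.2) U) {K S : Set E} (hK : IsCompact K)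
    (hS : MeasurableSet S) (hSK : S ⊆ K) {t : ℝ} (htK : {t} ×ˢ K ⊆ U) :
    HasDerivAt (fun s => ∫ x in S, f s x ∂μ) (∫ x in S, deriv (fun s => f s x) t ∂μ) t := by
  obtain ⟨V, W, hV, -, htV, hKW, hVW⟩ := generalized_tube_lemma isCompact_singleton hK hU htK
  obtain ⟨ε, hε, htεV⟩ := nhds_basis_closedBall.mem_iff.1 (hV.mem_nhds (htV rfl))
  have hεU : closedBall t ε ×ˢ K ⊆ U := (prod_mono htεV hKW).trans hVW
  set ft : ℝ × E → ℝ := fun p => fderiv ℝ (fun p => f p.1 p.2) p (1, 0)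
  have hft : ContinuousOn ft U :=
    (hf.continuousOn_fderiv_of_isOpen hU le_rfl).clm_apply continuousOn_const
  have hint : ∀ {g : ℝ × E → ℝ}, ContinuousOn g U → ∀ s ∈ closedBall t ε,
      IntegrableOn (fun x => g (s, x)) S μ := fun hg s hs =>
    (hg.comp (by fun_prop) fun x hx => hεU ⟨hs, hx⟩).integrableOn_of_subset_isCompact hK hS hSK
      (measure_mono hSK |>.trans_lt hK.measure_lt_top).ne
  obtain ⟨C, hC⟩ := (isCompact_closedBall t ε |>.prod hK).exists_bound_of_continuousOn
    (hft.mono hεU)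
  have hmain := hasDerivAt_integral_of_dominated_loc_of_deriv_le (μ := μ.restrict S)
    (F' := fun s x => ft (s, x)) (bound := fun _ => C) (ball_mem_nhds t hε)
    (eventually_of_mem (ball_mem_nhds t hε) fun s hs =>
      (hint hf.continuousOn s (ball_subset_closedBall hs)).aestronglyMeasurable)
    (hint hf.continuousOn t (mem_closedBall_self hε.le))
    (hint hft t (mem_closedBall_self hε.le)).aestronglyMeasurable
    (ae_restrict_of_forall_mem hS fun x hx s hs => hC _ ⟨ball_subset_closedBall hs, hSK hx⟩)
    (integrableOn_const (measure_mono hSK |>.trans_lt hK.measure_lt_top).ne)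
    (ae_restrict_of_forall_mem hS fun x hx s hs =>
      hf.hasDerivAt_fst hU (hεU ⟨ball_subset_closedBall hs, hSK hx⟩))
  refine hmain.2.congr_deriv (setIntegral_congr_fun hS fun x hx => ?_)
  exact (hf.hasDerivAt_fst hU (hεU ⟨mem_closedBall_self hε.le, hSK hx⟩)).deriv.symm

theorem abs_rpow_mul_sq {σ : ℝ} (hσ : σ ≠ -1) (a : ℝ) :
    |a| ^ (2 * σ) * a ^ 2 = |a| ^ (2 * σ + 2) := by
  rw [Real.rpow_add' (abs_nonneg a) (by contrapose! hσ; linarith), Real.rpow_two, sq_abs]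

/-- `μ[w]` is chosen exactly so that the constrained vector field is `L²`-orthogonal to `w`. -/
theorem integral_ball_mul_constrainedField_eq_zero {d : ℕ} {w : EuclideanSpace ℝ (Fin d) → ℝ}
    {W : Set (EuclideanSpace ℝ (Fin d))} (hW : IsOpen W) {R : ℝ} (hR : 0 < R)
    (hRW : closedBall 0 R ⊆ W) (hw : ContDiffOn ℝ 2 w W) (hw₀ : ∀ x, ‖x‖ = R → w x = 0)
    {σ ω : ℝ} (hσ : -1 < σ) (hwσ : ∫ x in ball 0 R, |w x| ^ (2 * σ + 2) ≠ 0) :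
    ∫ x in ball 0 R,
      w x * (lapl w x - ω * w x + muF (ball 0 R) σ ω w * |w x| ^ (2 * σ) * w x) = 0 := by
  set μw := muF (ball 0 R) σ ω w
  have hμw : μw * ∫ x in ball 0 R, |w x| ^ (2 * σ + 2)
      = (∫ x in ball 0 R, ‖fderiv ℝ w x‖ ^ 2) + ω * ∫ x in ball 0 R, w x ^ 2 :=
    div_mul_cancel₀ _ hwσ
  have hcont := hw.continuousOn
  have hint₁ : IntegrableOn (fun x => w x * lapl w x) (ball 0 R) :=
    (hcont.mul (hw.continuousOn_lapl hW)).integrableOn_ball hRW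
  have hint₂ : IntegrableOn (fun x => -ω * w x ^ 2) (ball 0 R) :=
    (continuousOn_const.mul (hcont.fun_pow 2)).integrableOn_ball hRW
  have hcont_rpow : ContinuousOn (fun x => |w x| ^ (2 * σ + 2)) W :=
    hcont.abs.rpow_const fun _ _ => Or.inr (by linarith)
  have hint₃ : IntegrableOn (fun x => μw * |w x| ^ (2 * σ + 2)) (ball 0 R) :=
    (continuousOn_const.mul hcont_rpow).integrableOn_ball hRW
  calc ∫ x in ball 0 R, w x * (lapl w x - ω * w x + μw * |w x| ^ (2 * σ) * w x)
      = ∫ x in ball 0 R, (w x * lapl w x + (-ω * w x ^ 2 + μw * |w x| ^ (2 * σ + 2))) :=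
        integral_congr_ae (Eventually.of_forall fun x => by
          dsimp only; rw [← abs_rpow_mul_sq hσ.ne']; ring)
    _ = 0 := by
        rw [integral_add hint₁ (hint₂.fun_add hint₃), integral_add hint₂ hint₃, integral_const_mul,
          integral_const_mul, integral_ball_mul_lapl_eq_neg hW hR hRW hw hw₀]
        linear_combination hμw

theorem IsClassicalSolution.hasDerivAt_integral_sq_eq_zero {d : ℕ} {R σ ω : ℝ} {I : Set ℝ}
    {u : ℝ → EuclideanSpace ℝ (Fin d) → ℝ} (hu : IsClassicalSolution d R σ ω I u) (hR : 0 < R)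
    (hσ : -1 < σ) {t : ℝ} (ht : t ∈ I) :
    HasDerivAt (fun s => ∫ x in Om d R, u s x ^ 2) 0 t := by
  unfold Om
  obtain ⟨U, hU, hIU, hu_smooth⟩ := hu.smooth
  have hu₂ : ContDiffOn ℝ 2 (fun p : ℝ × _ => u p.1 p.2) U :=
    hu_smooth.of_le (WithTop.coe_le_coe.2 le_top)
  have htU : {t} ×ˢ closedBall 0 R ⊆ U := fun p ⟨hp₁, hp₂⟩ =>
    hIU ⟨hp₁ ▸ ht, by rwa [Om, closure_ball 0 hR.ne']⟩
  have hRU : closedBall 0 R ⊆ Prod.mk t ⁻¹' U := fun x hx => htU ⟨rfl, hx⟩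
  have hut : ContDiffOn ℝ 2 (u t) (Prod.mk t ⁻¹' U) :=
    hu₂.comp (contDiff_prodMk_right t).contDiffOn (mapsTo_preimage _ _)
  have hflow := integral_ball_mul_constrainedField_eq_zero (ω := ω) (hU.preimage (by fun_prop))
    hR hRU hut (hu.boundary t ht) hσ (hu.posint t ht).ne'
  convert hasDerivAt_setIntegral_of_contDiffOn (f := fun s x => u s x ^ 2) (μ := volume) hU
    ((hu₂.pow 2).of_le one_le_two) (isCompact_closedBall 0 R) measurableSet_ball
    ball_subset_closedBall htU using 1
  rw [← mul_zero 2, ← hflow, ← integral_const_mul]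
  refine setIntegral_congr_fun measurableSet_ball fun x hx => ?_
  have hux : HasDerivAt (fun s => u s x) _ t := (hu₂.of_le one_le_two).hasDerivAt_fst hU
    (htU (mk_mem_prod (mem_singleton t) (ball_subset_closedBall hx)))
  rw [(hux.fun_pow 2).deriv, ← hux.deriv, hu.flow t ht x hx, Om]
  ring

theorem mass_conservation_general {d : ℕ} (R : ℝ) (hR : 0 < R) (σ ω T : ℝ)
    (hσ : 0 < σ)
    (u : ℝ → EuclideanSpace ℝ (Fin d) → ℝ)
    (hu : IsClassicalSolution d R σ ω (Set.Icc 0 T) u) :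
    ∀ t ∈ Set.Icc (0 : ℝ) T,
      ∫ x in Om d R, (u t x) ^ 2 = ∫ x in Om d R, (u 0 x) ^ 2 := by
  have hmass : ∀ t ∈ Icc 0 T, HasDerivAt (fun s => ∫ x in Om d R, u s x ^ 2) 0 t :=
    fun t ht => hu.hasDerivAt_integral_sq_eq_zero hR (by linarith) ht
  exact constant_of_has_deriv_right_zero
    (fun s hs => (hmass s hs).continuousAt.continuousWithinAt)
    fun s hs => (hmass s (Ico_subset_Icc_self hs)).hasDerivWithinAt

/-- conservation of the `L²` norm along the constrained flow. -/
theorem mass_conservation {d : ℕ} (hd : 1 ≤ d) (R : ℝ) (hR : 0 < R) (σ ω T : ℝ)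
    (hσ : 0 < σ) (hσd : 3 ≤ d → σ < 2 / ((d : ℝ) - 2)) (hT : 0 ≤ T)
    (u : ℝ → EuclideanSpace ℝ (Fin d) → ℝ)
    (hu : IsClassicalSolution d R σ ω (Set.Icc 0 T) u) :
    ∀ t ∈ Set.Icc (0 : ℝ) T,
      ∫ x in Om d R, (u t x) ^ 2 = ∫ x in Om d R, (u 0 x) ^ 2 :=
  mass_conservation_general R hR σ ω T hσ u hu
end
end

section
/- Let σ > 0, set r = 2σ+2 and r′ = (2σ+2)/(2σ+1), let Ω ⊆ ℝ^d be measurable, and let u, v : ℝ^d → ℝ be measurable with finite L^r(Ω) norms. Then ‖ |u|^{2σ}u − |v|^{2σ}v ‖_{L^{r′}(Ω)} ≤ (2σ+1) ( ‖u‖_{L^r(Ω)}^{2σ} + ‖v‖_{L^r(Ω)}^{2σ} ) ‖u − v‖_{L^r(Ω)}. -/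
/-!
The map `φ(t) = |t|^p t` has derivative `(p+1)|t|^p`, so the mean value theorem gives
`|φ(a) - φ(b)| ≤ (p+1)(|a|^p + |b|^p)|a - b|` pointwise. With `r = p + 2`, the exponents split as
`1/r' = p/r + 1/r`, so Hölder's inequality bounds the `L^{r'}` norm of
`(|u|^p + |v|^p)|u - v|` by `‖|u|^p + |v|^p‖_{r/p} ‖u - v‖_r`; Minkowski's inequality in `L^{r/p}` and
`‖|u|^p‖_{r/p} = ‖u‖_r^p` finish the estimate.
-/

open MeasureTheory Set Filter

open scoped Topology

theorem hasDerivAt_abs_rpow_mul_self {p : ℝ} (hp : 0 < p) (t : ℝ) :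
    HasDerivAt (fun s : ℝ => |s| ^ p * s) ((p + 1) * |t| ^ p) t := by
  rcases eq_or_ne t 0 with rfl | ht
  · rw [abs_zero, Real.zero_rpow hp.ne', mul_zero, hasDerivAt_iff_tendsto_slope_zero]
    have hcont : Tendsto (fun s : ℝ => |s| ^ p) (𝓝 0) (𝓝 0) := by
      simpa [Real.zero_rpow hp.ne'] using
        ((continuous_abs.rpow_const fun _ => Or.inr hp.le).tendsto 0)
    refine (hcont.mono_left nhdsWithin_le_nhds).congr' ?_
    filter_upwards [self_mem_nhdsWithin] with s (hs : s ≠ 0)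
    simp only [zero_add, abs_zero, Real.zero_rpow hp.ne', zero_mul, sub_zero, smul_eq_mul]
    field_simp
  · refine (((hasDerivAt_abs ht).rpow_const (Or.inl (abs_ne_zero.2 ht))).mul
      (hasDerivAt_id' t)).congr_deriv ?_
    have hpow : |t| ^ (p - 1) * |t| = |t| ^ p := by
      rw [← Real.rpow_add_one (abs_ne_zero.2 ht)]; ring_nf
    have hsign : (SignType.sign t : ℝ) * t = |t| := sign_mul_self t
    linear_combination p * hpow + p * |t| ^ (p - 1) * hsign

theorem abs_abs_rpow_mul_self_sub_le {p : ℝ} (hp : 0 < p) (a b : ℝ) :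
    |(|a| ^ p * a - |b| ^ p * b)| ≤ (p + 1) * (|a| ^ p + |b| ^ p) * |a - b| := by
  have hderiv_le : ∀ t ∈ uIcc b a, ‖(p + 1) * |t| ^ p‖ ≤ (p + 1) * (|a| ^ p + |b| ^ p) := by
    intro t ht
    have hmax : |t| ^ p ≤ max |b| |a| ^ p := by
      refine Real.rpow_le_rpow (abs_nonneg t) ?_ hp.le
      rcases mem_uIcc.1 ht with ⟨hbt, hta⟩ | ⟨hat, htb⟩
      · exact abs_le_max_abs_abs hbt hta
      · exact max_comm |a| |b| ▸ abs_le_max_abs_abs hat htb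
    have hsum : max |b| |a| ^ p ≤ |a| ^ p + |b| ^ p := by
      rcases max_choice |b| |a| with h | h <;> rw [h] <;>
        linarith [Real.rpow_nonneg (abs_nonneg a) p, Real.rpow_nonneg (abs_nonneg b) p]
    rw [Real.norm_of_nonneg (by positivity)]
    gcongr
    exact hmax.trans hsum
  simpa [Real.norm_eq_abs] using (convex_uIcc b a).norm_image_sub_le_of_norm_hasDerivWithin_le
    (fun t _ => (hasDerivAt_abs_rpow_mul_self hp t).hasDerivWithinAt) hderiv_le
    left_mem_uIcc right_mem_uIcc

theorem holderTriple_ofReal {p q r : ℝ} (hp : 0 < p) (hq : 0 < q) (hr : 0 < r)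
    (hpqr : p⁻¹ + q⁻¹ = r⁻¹) :
    ENNReal.HolderTriple (ENNReal.ofReal p) (ENNReal.ofReal q) (ENNReal.ofReal r) := by
  constructor
  rw [← ENNReal.ofReal_inv_of_pos hp, ← ENNReal.ofReal_inv_of_pos hq,
    ← ENNReal.ofReal_inv_of_pos hr, ← ENNReal.ofReal_add (by positivity) (by positivity), hpqr]

section RealExponent

variable {α : Type*} [MeasurableSpace α] {μ : Measure α} {f : α → ℝ} {p : ℝ}

-- No integrability is needed: otherwise both sides are junk `0`.
theorem toReal_eLpNorm_ofReal (hf : AEStronglyMeasurable f μ) (hp : 0 < p) :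
    (eLpNorm f (ENNReal.ofReal p) μ).toReal = (∫ x, |f x| ^ p ∂μ) ^ (1 / p) := by
  rw [toReal_eLpNorm hf, lpNorm_eq_integral_norm_rpow_toReal (by simpa) ENNReal.ofReal_ne_top hf,
    ENNReal.toReal_ofReal hp.le, one_div]
  rfl

theorem memLp_ofReal_of_integrable_abs_rpow (hf : AEStronglyMeasurable f μ) (hp : 0 < p)
    (hint : Integrable (fun x => |f x| ^ p) μ) : MemLp f (ENNReal.ofReal p) μ :=
  (integrable_norm_rpow_iff hf (by simpa) ENNReal.ofReal_ne_top).1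
    (by simpa [ENNReal.toReal_ofReal hp.le] using hint)

theorem eLpNorm_abs_rpow_ofReal_div (hp : 0 < p) {q : ℝ} (hq : 0 ≤ q) :
    eLpNorm (fun x => |f x| ^ p) (ENNReal.ofReal (q / p)) μ =
      eLpNorm f (ENNReal.ofReal q) μ ^ p := by
  have h := eLpNorm_norm_rpow (p := ENNReal.ofReal (q / p)) (μ := μ) f hp
  rwa [← ENNReal.ofReal_mul (by positivity), div_mul_cancel₀ _ hp.ne'] at h

theorem eLpNorm_abs_rpow_mul_self_sub_le (hp : 0 < p) {u v : α → ℝ}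
    (hu : AEStronglyMeasurable u μ) (hv : AEStronglyMeasurable v μ) :
    eLpNorm (fun x => |u x| ^ p * u x - |v x| ^ p * v x) (ENNReal.ofReal ((p + 2) / (p + 1))) μ ≤
      ENNReal.ofReal (p + 1) *
        (eLpNorm u (ENNReal.ofReal (p + 2)) μ ^ p + eLpNorm v (ENNReal.ofReal (p + 2)) μ ^ p) *
        eLpNorm (u - v) (ENNReal.ofReal (p + 2)) μ := by
  have : ENNReal.HolderTriple (ENNReal.ofReal ((p + 2) / p)) (ENNReal.ofReal (p + 2))
      (ENNReal.ofReal ((p + 2) / (p + 1))) :=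
    holderTriple_ofReal (by positivity) (by positivity) (by positivity) (by field_simp)
  have hr : 0 ≤ p + 2 := by linarith
  have hu_pow : AEStronglyMeasurable (fun x => |u x| ^ p) μ := by fun_prop (disch := positivity)
  have hv_pow : AEStronglyMeasurable (fun x => |v x| ^ p) μ := by fun_prop (disch := positivity)
  calc eLpNorm (fun x => |u x| ^ p * u x - |v x| ^ p * v x) (ENNReal.ofReal ((p + 2) / (p + 1))) μ
      ≤ eLpNorm (fun x => (p + 1) * (|u x| ^ p + |v x| ^ p) * (u - v) x)
          (ENNReal.ofReal ((p + 2) / (p + 1))) μ := by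
        refine eLpNorm_mono fun x => (abs_abs_rpow_mul_self_sub_le hp (u x) (v x)).trans_eq ?_
        rw [Real.norm_eq_abs, abs_mul,
          abs_of_nonneg (a := (p + 1) * (|u x| ^ p + |v x| ^ p)) (by positivity)]
        rfl
    _ ≤ ENNReal.ofReal (p + 1) * eLpNorm (fun x => |u x| ^ p + |v x| ^ p)
          (ENNReal.ofReal ((p + 2) / p)) μ * eLpNorm (u - v) (ENNReal.ofReal (p + 2)) μ := by
        refine eLpNorm_le_eLpNorm_mul_eLpNorm'_of_norm (hu_pow.add hv_pow) (hu.sub hv)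
          (fun s t => (p + 1) * s * t) (p + 1).toNNReal (.of_forall fun x => ?_)
        rw [Real.coe_toNNReal _ (by positivity)]
        simp only [Real.norm_eq_abs, abs_mul, abs_of_nonneg (by positivity : (0 : ℝ) ≤ p + 1),
          le_refl]
    _ ≤ ENNReal.ofReal (p + 1) *
          (eLpNorm u (ENNReal.ofReal (p + 2)) μ ^ p + eLpNorm v (ENNReal.ofReal (p + 2)) μ ^ p) *
          eLpNorm (u - v) (ENNReal.ofReal (p + 2)) μ := by
        rw [← eLpNorm_abs_rpow_ofReal_div hp hr, ← eLpNorm_abs_rpow_ofReal_div hp hr]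
        gcongr
        exact eLpNorm_add_le hu_pow hv_pow
          (ENNReal.one_le_ofReal.2 (by rw [le_div_iff₀ hp]; linarith))

end RealExponent

theorem nonlinearity_difference_estimate_general {d : ℕ} (σ : ℝ) (hσ : 0 < σ)
    (Ω : Set (EuclideanSpace ℝ (Fin d)))
    (u v : EuclideanSpace ℝ (Fin d) → ℝ) (hu : Measurable u) (hv : Measurable v)
    (hur : IntegrableOn (fun x => |u x| ^ (2 * σ + 2)) Ω)
    (hvr : IntegrableOn (fun x => |v x| ^ (2 * σ + 2)) Ω) :
    (∫ x in Ω, |(|u x| ^ (2 * σ) * u x - |v x| ^ (2 * σ) * v x)| ^ ((2 * σ + 2) / (2 * σ + 1))) ^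
        ((2 * σ + 1) / (2 * σ + 2)) ≤
      (2 * σ + 1) *
        (((∫ x in Ω, |u x| ^ (2 * σ + 2)) ^ (1 / (2 * σ + 2))) ^ (2 * σ) +
          ((∫ x in Ω, |v x| ^ (2 * σ + 2)) ^ (1 / (2 * σ + 2))) ^ (2 * σ)) *
        (∫ x in Ω, |u x - v x| ^ (2 * σ + 2)) ^ (1 / (2 * σ + 2)) := by
  have hr : 0 < 2 * σ + 2 := by positivity
  have hu_mem := memLp_ofReal_of_integrable_abs_rpow hu.aestronglyMeasurable hr hur
  have hv_mem := memLp_ofReal_of_integrable_abs_rpow hv.aestronglyMeasurable hr hvr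
  have hu_fin := hu_mem.eLpNorm_ne_top
  have hv_fin := hv_mem.eLpNorm_ne_top
  have huv_fin := (hu_mem.sub hv_mem).eLpNorm_ne_top
  have key := ENNReal.toReal_mono (by finiteness) (eLpNorm_abs_rpow_mul_self_sub_le
    (μ := volume.restrict Ω) (by positivity : 0 < 2 * σ) hu.aestronglyMeasurable
    hv.aestronglyMeasurable)
  rwa [toReal_eLpNorm_ofReal (by fun_prop) (by positivity), one_div_div, ENNReal.toReal_mul,
    ENNReal.toReal_mul, ENNReal.toReal_add (by finiteness) (by finiteness), ← ENNReal.toReal_rpow,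
    ← ENNReal.toReal_rpow, toReal_eLpNorm_ofReal hu.aestronglyMeasurable hr,
    toReal_eLpNorm_ofReal hv.aestronglyMeasurable hr,
    toReal_eLpNorm_ofReal (hu.sub hv).aestronglyMeasurable hr,
    ENNReal.toReal_ofReal (by positivity)] at key

/-- `L^{r'}` estimate of the difference of the power nonlinearities,
with `r = 2σ+2` and `r' = (2σ+2)/(2σ+1)`. -/
theorem nonlinearity_difference_estimate {d : ℕ} (σ : ℝ) (hσ : 0 < σ)
    (Ω : Set (EuclideanSpace ℝ (Fin d))) (hΩ : MeasurableSet Ω)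
    (u v : EuclideanSpace ℝ (Fin d) → ℝ) (hu : Measurable u) (hv : Measurable v)
    (hur : IntegrableOn (fun x => |u x| ^ (2 * σ + 2)) Ω)
    (hvr : IntegrableOn (fun x => |v x| ^ (2 * σ + 2)) Ω) :
    (∫ x in Ω, |(|u x| ^ (2 * σ) * u x - |v x| ^ (2 * σ) * v x)| ^ ((2 * σ + 2) / (2 * σ + 1))) ^
        ((2 * σ + 1) / (2 * σ + 2)) ≤
      (2 * σ + 1) *
        (((∫ x in Ω, |u x| ^ (2 * σ + 2)) ^ (1 / (2 * σ + 2))) ^ (2 * σ) +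
          ((∫ x in Ω, |v x| ^ (2 * σ + 2)) ^ (1 / (2 * σ + 2))) ^ (2 * σ)) *
        (∫ x in Ω, |u x - v x| ^ (2 * σ + 2)) ^ (1 / (2 * σ + 2)) :=
  nonlinearity_difference_estimate_general σ hσ Ω u v hu hv hur hvr
end
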